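/- arXiv:1012.3348 — 3 statements merged into one kernel-verified Lean document; each statement's English description precedes it below -/
import Mathlib

section
/- Let A be a Banach algebra, B a Banach A-bimodule, and n ≥ 0 an even integer such that every bounded subset of B^(n) is relatively weakly compact. Suppose (e_α^(n)) is a bounded net in A^(n) with b^(n)e_α^(n) → b^(n) in norm for every b^(n) ∈ B^(n) (a bounded right approximate identity for B^(n)), that e_α^(n) → e^(n+2) in the weak* topology of A^(n+2), that e^(n+2) is a right unit for the A^(n+2)-module B^(n+2) and for every b^(n+2) ∈ B^(n+2) and every net (a_β^(n+2)) in A^(n+2) with a_β^(n+2) → e^(n+2) weak* one has b^(n+2)a_β^(n+2) → b^(n+2)e^(n+2) weak* (i.e. Z^ℓ_{e^(n+2)}(B^(n+2)) = B^(n+2)), and that B^(n+2)e_α^(n) ⊆ B^(n) for every α. Then Z^ℓ_{A^(n+2)}(B^(n+2)) = B^(n+2). -/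
/-!
Common infrastructure for formalizing "Topological centers of the n-th dual of
module actions" (Haghnejad Azar, Riazi).

We work over `ℝ`.  A Banach algebra is a complete `NonUnitalNormedRing` which is
a normed `ℝ`-algebra; a Banach `A`-bimodule `B` is given by two continuous
bilinear module actions `πl : A →L B →L B`, `πr : B →L A →L B` satisfying the
usual associativity identities.

`BB` bundles a normed `ℝ`-space.  `BB.dual` is the topological dual,
`BB.bst` is the Arens adjoint `m ↦ m^*` of a bounded bilinear map
(`⟨m^*(z',x), y⟩ = ⟨z', m(x,y)⟩`), `BB.arens m = m^{***}` is the first Arens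
extension, `BB.diter E k` is the `2k`-th dual of `E`, and `BB.iterBil m k` is
the `k`-fold iterated first Arens extension of `m` acting on `2k`-th duals.

Even integers `n ≥ 0` (resp. `n ≥ 2`) are represented as `n = 2*k`
(resp. `n = 2*(j+1)`), so that `A^{(n)}` is `Ad A k`, `A^{(n+1)}` is
`((BB.of A).diter k).dual.carrier`, etc.

Weak-star and weak convergence of nets are expressed through filters
(`wsTendsto`, `wTendsto`), and the relevant topological centers and `wap`
spaces become the predicates `MemZlBA`, `MemZlAB`, `MemWapL` below.
-/

noncomputable section

/-- A bundled normed real vector space. -/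
structure BB : Type 1 where
  carrier : Type
  [grp : NormedAddCommGroup carrier]
  [mod : NormedSpace ℝ carrier]

attribute [instance] BB.grp BB.mod

open ContinuousLinearMap Filter Topology Bornology

/-- Bundle a normed space. -/
abbrev BB.of (X : Type) [NormedAddCommGroup X] [NormedSpace ℝ X] : BB := ⟨X⟩

/-- The (topological) dual space. -/
abbrev BB.dual (E : BB) : BB := ⟨E.carrier →L[ℝ] ℝ⟩

/-- Bounded bilinear maps `E × F → G`. -/
abbrev BB.Bil (E F G : BB) : Type := E.carrier →L[ℝ] F.carrier →L[ℝ] G.carrier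

/-- The Arens adjoint `m^*` of a bounded bilinear map `m : X × Y → Z`:
`⟨m^*(z', x), y⟩ = ⟨z', m(x, y)⟩`. -/
def BB.bst {E F G : BB} (m : BB.Bil E F G) : BB.Bil G.dual E F.dual :=
  ((ContinuousLinearMap.compL ℝ E.carrier (F.carrier →L[ℝ] G.carrier)
      (F.carrier →L[ℝ] ℝ)).flip m).comp
    (ContinuousLinearMap.compL ℝ F.carrier G.carrier ℝ)

/-- The first Arens extension `m^{***} = ((m^*)^*)^*` of a bounded bilinear map. -/
def BB.arens {E F G : BB} (m : BB.Bil E F G) :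
    BB.Bil E.dual.dual F.dual.dual G.dual.dual :=
  BB.bst (BB.bst (BB.bst m))

/-- The canonical embedding of a normed space into its double dual. -/
def BB.incl (E : BB) : E.carrier →L[ℝ] E.dual.dual.carrier :=
  (ContinuousLinearMap.id ℝ (E.carrier →L[ℝ] ℝ)).flip

/-- The adjoint of a continuous linear map. -/
def BB.adj {E F : BB} (f : E.carrier →L[ℝ] F.carrier) :
    F.dual.carrier →L[ℝ] E.dual.carrier :=
  (ContinuousLinearMap.compL ℝ E.carrier F.carrier ℝ).flip f

/-- `E.diter k` is the `2k`-th dual of `E`. -/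
@[reducible] def BB.diter (E : BB) : ℕ → BB
  | 0 => E
  | k + 1 => ((BB.diter E k).dual).dual

/-- The `k`-fold iterated first Arens extension of `m` to the `2k`-th duals. -/
@[reducible] def BB.iterBil {E F G : BB} (m : BB.Bil E F G) :
    ∀ k : ℕ, BB.Bil (E.diter k) (F.diter k) (G.diter k)
  | 0 => m
  | k + 1 => BB.arens (BB.iterBil m k)

/-- Weak-star convergence of a net of functionals (nets are encoded as maps
together with a filter on the index type). -/
def wsTendsto {E : BB} {ι : Type} (l : Filter ι) (f : ι → E.dual.carrier)
    (g : E.dual.carrier) : Prop :=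
  ∀ x : E.carrier, Tendsto (fun i => f i x) l (𝓝 (g x))

/-- Weak convergence of a net. -/
def wTendsto {E : BB} {ι : Type} (l : Filter ι) (f : ι → E.carrier)
    (g : E.carrier) : Prop :=
  ∀ ψ : E.dual.carrier, Tendsto (fun i => ψ (f i)) l (𝓝 (ψ g))

/-- A set is relatively weakly compact if its closure in the weak topology is
compact. -/
def RelWeaklyCompact {E : BB} (s : Set E.carrier) : Prop :=
  IsCompact (closure (toWeakSpace ℝ E.carrier '' s))

section Setup

variable (A B : Type) [NonUnitalNormedRing A] [NormedSpace ℝ A] [IsScalarTower ℝ A A]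
  [SMulCommClass ℝ A A] [NormedAddCommGroup B] [NormedSpace ℝ B]

/-- `A^{(2k)}`, the `2k`-th dual of `A`. -/
abbrev Ad (k : ℕ) : Type := ((BB.of A).diter k).carrier

/-- `B^{(2k)}`, the `2k`-th dual of `B`. -/
abbrev Bd (k : ℕ) : Type := ((BB.of B).diter k).carrier

variable (πl : A →L[ℝ] B →L[ℝ] B) (πr : B →L[ℝ] A →L[ℝ] B)

/-- The iterated (first Arens extension of the) left module action
`A^{(2k)} × B^{(2k)} → B^{(2k)}`. -/
abbrev actL (k : ℕ) :
    ((BB.of A).diter k).carrier →L[ℝ] ((BB.of B).diter k).carrier →L[ℝ]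
      ((BB.of B).diter k).carrier :=
  BB.iterBil (E := BB.of A) (F := BB.of B) (G := BB.of B) πl k

/-- The iterated (first Arens extension of the) right module action
`B^{(2k)} × A^{(2k)} → B^{(2k)}`. -/
abbrev actR (k : ℕ) :
    ((BB.of B).diter k).carrier →L[ℝ] ((BB.of A).diter k).carrier →L[ℝ]
      ((BB.of B).diter k).carrier :=
  BB.iterBil (E := BB.of B) (F := BB.of A) (G := BB.of B) πr k

/-- The iterated first Arens product on `A^{(2k)}`. -/
abbrev mulA (k : ℕ) :
    ((BB.of A).diter k).carrier →L[ℝ] ((BB.of A).diter k).carrier →L[ℝ]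
      ((BB.of A).diter k).carrier :=
  BB.iterBil (E := BB.of A) (F := BB.of A) (G := BB.of A) (ContinuousLinearMap.mul ℝ A) k

/-- `a ∈ Z^ℓ_{B^{(2k+2)}}(A^{(2k+2)})`: the map `b ↦ a b` on `B^{(2k+2)}` is
weak-star to weak-star continuous. -/
def MemZlBA (k : ℕ) (a : Ad A (k + 1)) : Prop :=
  ∀ {ι : Type} (l : Filter ι), l.NeBot →
    ∀ (bα : ι → Bd B (k + 1)) (b : Bd B (k + 1)),
      wsTendsto (E := ((BB.of B).diter k).dual) l bα b →
      wsTendsto (E := ((BB.of B).diter k).dual) l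
        (fun i => actL A B πl (k + 1) a (bα i)) (actL A B πl (k + 1) a b)

/-- `b ∈ Z^ℓ_{A^{(2k+2)}}(B^{(2k+2)})`: the map `a ↦ b a` from `A^{(2k+2)}` to
`B^{(2k+2)}` is weak-star to weak-star continuous. -/
def MemZlAB (k : ℕ) (b : Bd B (k + 1)) : Prop :=
  ∀ {ι : Type} (l : Filter ι), l.NeBot →
    ∀ (aα : ι → Ad A (k + 1)) (a : Ad A (k + 1)),
      wsTendsto (E := ((BB.of A).diter k).dual) l aα a →
      wsTendsto (E := ((BB.of B).diter k).dual) l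
        (fun i => actR A B πr (k + 1) b (aα i)) (actR A B πr (k + 1) b a)

/-- `b1 ∈ wap_ℓ(B^{(2k)}) ⊆ B^{(2k+1)}`:
`⟨b2 ⬝ aα, b1⟩ → ⟨b2 ⬝ a2, b1⟩` whenever `aα → a2` weak-star in `A^{(2k+2)}`. -/
def MemWapL (k : ℕ) (b1 : ((BB.of B).diter k).dual.carrier) : Prop :=
  ∀ (b2 : Bd B (k + 1)),
    ∀ {ι : Type} (l : Filter ι), l.NeBot →
      ∀ (aα : ι → Ad A (k + 1)) (a2 : Ad A (k + 1)),
        wsTendsto (E := ((BB.of A).diter k).dual) l aα a2 →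
        Tendsto (fun i => actR A B πr (k + 1) b2 (aα i) b1) l
          (𝓝 (actR A B πr (k + 1) b2 a2 b1))

end Setup

/-!
The hypothesis `B^{(n+2)} e_α ⊆ B^{(n)}` gives, for each `b ∈ B^{(n+2)}`, a bounded net
`b_α ∈ B^{(n)}` with `b e_α = b_α`. Local topological centrality at the right unit `e` makes
`b_α → b e = b` weak-star, while relative weak compactness provides a weak cluster point
`b₀ ∈ B^{(n)}` of `(b_α)`; hence `b = b₀` lies in `B^{(n)}`. Finally, the first Arens
extension of a bilinear map is weak-star continuous in its second variable whenever the first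
one lies in the predual.
-/

namespace BB

lemma isometry_incl (E : BB) : Isometry (BB.incl E) :=
  (NormedSpace.inclusionInDoubleDualLi ℝ (E := E.carrier)).isometry

lemma wsTendsto_arens_incl {E F G : BB} (m : BB.Bil E F G) (x : E.carrier) {ι : Type}
    {l : Filter ι} {y : ι → F.dual.dual.carrier} {y₀ : F.dual.dual.carrier}
    (h : wsTendsto (E := F.dual) l y y₀) :
    wsTendsto (E := G.dual) l (fun i => BB.arens m (BB.incl E x) (y i))
      (BB.arens m (BB.incl E x) y₀) :=
  fun z => h (BB.bst m z x)

lemma isBounded_range_of_isBounded_range_incl {E : BB} {ι : Type} {x : ι → E.carrier}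
    (h : IsBounded (Set.range fun i => BB.incl E (x i))) : IsBounded (Set.range x) := by
  rw [Set.range_comp' (BB.incl E)] at h
  simpa only [Set.preimage_image_eq _ (isometry_incl E).injective] using
    (isometry_incl E).antilipschitz.isBounded_preimage h

lemma exists_incl_eq_of_wsTendsto {E : BB} {ι : Type} {l : Filter ι} [l.NeBot]
    {x : ι → E.carrier} (hx : RelWeaklyCompact (E := E) (Set.range x))
    {φ : E.dual.dual.carrier} (h : wsTendsto (E := E.dual) l (fun i => BB.incl E (x i)) φ) :
    ∃ x₀, BB.incl E x₀ = φ := by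
  let xw : ι → WeakSpace ℝ E.carrier := fun i => toWeakSpace ℝ E.carrier (x i)
  have hle : map xw l ≤ 𝓟 (closure (toWeakSpace ℝ E.carrier '' Set.range x)) :=
    le_principal_iff.mpr (mem_map.mpr (Eventually.of_forall fun i =>
      subset_closure ⟨x i, ⟨i, rfl⟩, rfl⟩))
  obtain ⟨x₀, -, hx₀⟩ := hx.exists_clusterPt hle
  refine ⟨x₀, ContinuousLinearMap.ext fun z => ?_⟩
  have hz : ClusterPt (z x₀) (map (fun i => z (x i)) l) :=
    hx₀.map (WeakBilin.eval_continuous _ z).continuousAt (tendsto_map'_iff.mpr tendsto_map)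
  exact eq_of_nhds_neBot (hz.mono (h z))

end BB

lemma memZlAB_incl (A B : Type) [NonUnitalNormedRing A] [NormedSpace ℝ A]
    [NormedAddCommGroup B] [NormedSpace ℝ B] (πr : B →L[ℝ] A →L[ℝ] B) (k : ℕ) (b : Bd B k) :
    MemZlAB A B πr k (BB.incl _ b) :=
  fun _ _ _ _ h => BB.wsTendsto_arens_incl (actR A B πr k) b h

theorem stmt4_general
    (A B : Type) [NonUnitalNormedRing A] [NormedSpace ℝ A]
    [NormedAddCommGroup B] [NormedSpace ℝ B]
    (πr : B →L[ℝ] A →L[ℝ] B)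
    (k : ℕ)
    (hwc : ∀ s : Set (Bd B k), Bornology.IsBounded s → RelWeaklyCompact (E := (BB.of B).diter k) s)
    {ι : Type} (l : Filter ι) (hl : l.NeBot) (e : ι → Ad A k)
    (hbd : Bornology.IsBounded (Set.range e))
    (e2 : Ad A (k + 1))
    (hconv : wsTendsto (E := ((BB.of A).diter k).dual) l
        (fun i => BB.incl ((BB.of A).diter k) (e i)) e2)
    (hunit : ∀ b2 : Bd B (k + 1), actR A B πr (k + 1) b2 e2 = b2)
    (hloc : ∀ (b2 : Bd B (k + 1)) {κ : Type} (l' : Filter κ), l'.NeBot →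
        ∀ aβ : κ → Ad A (k + 1),
          wsTendsto (E := ((BB.of A).diter k).dual) l' aβ e2 →
          wsTendsto (E := ((BB.of B).diter k).dual) l'
            (fun i => actR A B πr (k + 1) b2 (aβ i)) (actR A B πr (k + 1) b2 e2))
    (hsub : ∀ (i : ι) (b2 : Bd B (k + 1)), ∃ b0 : Bd B k,
        actR A B πr (k + 1) b2 (BB.incl ((BB.of A).diter k) (e i)) =
          BB.incl ((BB.of B).diter k) b0) :
    ∀ b2 : Bd B (k + 1), MemZlAB A B πr k b2 := by
  intro b
  choose bα hbα using fun i => hsub i b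
  have hlim : wsTendsto (E := ((BB.of B).diter k).dual) l
      (fun i => BB.incl _ (bα i)) b := by
    simpa only [← hbα, hunit] using hloc b l hl _ hconv
  have hbdd : IsBounded (Set.range bα) := by
    refine BB.isBounded_range_of_isBounded_range_incl ?_
    simp_rw [← hbα, Set.range_comp' (actR A B πr (k + 1) b), Set.range_comp' (BB.incl _)]
    exact (actR A B πr (k + 1) b).lipschitz.isBounded_image
      ((BB.isometry_incl _).lipschitz.isBounded_image hbd)
  have := hl
  obtain ⟨b₀, rfl⟩ := BB.exists_incl_eq_of_wsTendsto (hwc _ hbdd) hlim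
  exact @memZlAB_incl A B _ _ _ _ πr k b₀

/-- (`n = 2*k ≥ 0` even.)  Suppose every bounded subset of
`B^{(n)}` is relatively weakly compact, `(e_α)` is a bounded right approximate
identity for `B^{(n)}` contained in `A^{(n)}`, `e_α → e^{(n+2)}` weak-star in
`A^{(n+2)}`, `e^{(n+2)}` is a right unit for `B^{(n+2)}` with
`Z^ℓ_{e^{(n+2)}}(B^{(n+2)}) = B^{(n+2)}` (the locally topological center), and
`B^{(n+2)} e_α ⊆ B^{(n)}` for every `α`.  Then
`Z^ℓ_{A^{(n+2)}}(B^{(n+2)}) = B^{(n+2)}`. -/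
theorem stmt4
    (A B : Type) [NonUnitalNormedRing A] [NormedSpace ℝ A] [IsScalarTower ℝ A A]
    [SMulCommClass ℝ A A] [CompleteSpace A]
    [NormedAddCommGroup B] [NormedSpace ℝ B] [CompleteSpace B]
    (πl : A →L[ℝ] B →L[ℝ] B) (πr : B →L[ℝ] A →L[ℝ] B)
    (hπl : ∀ (a a' : A) (b : B), πl (a * a') b = πl a (πl a' b))
    (hπr : ∀ (b : B) (a a' : A), πr b (a * a') = πr (πr b a) a')
    (hπlr : ∀ (a : A) (b : B) (a' : A), πr (πl a b) a' = πl a (πr b a'))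
    (k : ℕ)
    (hwc : ∀ s : Set (Bd B k), Bornology.IsBounded s → RelWeaklyCompact (E := (BB.of B).diter k) s)
    {ι : Type} (l : Filter ι) (hl : l.NeBot) (e : ι → Ad A k)
    (hbd : Bornology.IsBounded (Set.range e))
    (hrai : ∀ b : Bd B k, Filter.Tendsto (fun i => actR A B πr k b (e i)) l (nhds b))
    (e2 : Ad A (k + 1))
    (hconv : wsTendsto (E := ((BB.of A).diter k).dual) l
        (fun i => BB.incl ((BB.of A).diter k) (e i)) e2)
    (hunit : ∀ b2 : Bd B (k + 1), actR A B πr (k + 1) b2 e2 = b2)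
    (hloc : ∀ (b2 : Bd B (k + 1)) {κ : Type} (l' : Filter κ), l'.NeBot →
        ∀ aβ : κ → Ad A (k + 1),
          wsTendsto (E := ((BB.of A).diter k).dual) l' aβ e2 →
          wsTendsto (E := ((BB.of B).diter k).dual) l'
            (fun i => actR A B πr (k + 1) b2 (aβ i)) (actR A B πr (k + 1) b2 e2))
    (hsub : ∀ (i : ι) (b2 : Bd B (k + 1)), ∃ b0 : Bd B k,
        actR A B πr (k + 1) b2 (BB.incl ((BB.of A).diter k) (e i)) =
          BB.incl ((BB.of B).diter k) b0) :
    ∀ b2 : Bd B (k + 1), MemZlAB A B πr k b2 :=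
  stmt4_general A B πr k hwc l hl e hbd e2 hconv hunit hloc hsub
end
end

section
/- Let A be a Banach algebra, B a Banach A-bimodule, and n ≥ 0 an even integer. If A^(n)A^(n+2) ⊆ A^(n)Z^ℓ_{B^(n+2)}(A^(n+2)), then A^(n)A^(n+2) ⊆ Z^ℓ_{B^(n+2)}(A^(n+2)). Here A^(n)A^(n+2) is the set of products a^(n)a^(n+2) in A^(n+2) (first Arens product, A^(n) canonically embedded in A^(n+2)), and A^(n)Z^ℓ_{B^(n+2)}(A^(n+2)) = {a^(n)φ : a^(n) ∈ A^(n), φ ∈ Z^ℓ_{B^(n+2)}(A^(n+2))}. -/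
/-!
Common infrastructure for formalizing "Topological centers of the n-th dual of
module actions" (Haghnejad Azar, Riazi).

We work over `ℝ`.  A Banach algebra is a complete `NonUnitalNormedRing` which is
a normed `ℝ`-algebra; a Banach `A`-bimodule `B` is given by two continuous
bilinear module actions `πl : A →L B →L B`, `πr : B →L A →L B` satisfying the
usual associativity identities.

`BB` bundles a normed `ℝ`-space.  `BB.dual` is the topological dual,
`BB.bst` is the Arens adjoint `m ↦ m^*` of a bounded bilinear map
(`⟨m^*(z',x), y⟩ = ⟨z', m(x,y)⟩`), `BB.arens m = m^{***}` is the first Arens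
extension, `BB.diter E k` is the `2k`-th dual of `E`, and `BB.iterBil m k` is
the `k`-fold iterated first Arens extension of `m` acting on `2k`-th duals.

Even integers `n ≥ 0` (resp. `n ≥ 2`) are represented as `n = 2*k`
(resp. `n = 2*(j+1)`), so that `A^{(n)}` is `Ad A k`, `A^{(n+1)}` is
`((BB.of A).diter k).dual.carrier`, etc.

Weak-star and weak convergence of nets are expressed through filters
(`wsTendsto`, `wTendsto`), and the relevant topological centers and `wap`
spaces become the predicates `MemZlBA`, `MemZlAB`, `MemWapL` below.
-/

noncomputable section

open ContinuousLinearMap Filter Topology Bornology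

/-!
For `x ∈ A^{(n)}` embedded in `A^{(n+2)}`, associativity of the iterated left action gives
`⟨(x φ) b, f⟩ = ⟨φ b, f x⟩` for every `b ∈ B^{(n+2)}` and `f ∈ B^{(n+1)}`. Hence `x φ` inherits
the weak-star continuity of `b ↦ φ b`, so every element `x φ` with `φ` in the topological
center lies in the topological center itself.
-/

namespace BB

variable {E F G : BB}

theorem arens_incl_apply (m : Bil E F G) (x : E.carrier) (y : F.dual.dual.carrier)
    (z : G.dual.carrier) : arens m (incl E x) y z = y (bst m z x) :=
  rfl

theorem arens_assoc (m : Bil E F F) (μ : Bil E E E)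
    (hm : ∀ p q c, m (μ p q) c = m p (m q c)) (p q : E.dual.dual.carrier)
    (c : F.dual.dual.carrier) : arens m (arens μ p q) c = arens m p (arens m q c) := by
  ext f
  change p (bst (bst μ) q (bst (bst m) c f)) = p (bst (bst m) (arens m q c) f)
  congr 1
  ext x
  change q (bst μ (bst (bst m) c f) x) = q (bst (bst m) c (bst m f x))
  congr 1
  ext y
  change c (bst m f (μ x y)) = c (bst m (bst m f x) y)
  congr 1
  ext z
  change f (m (μ x y) z) = f (m x (m y z))
  rw [hm]

theorem iterBil_assoc (m : Bil E F F) (μ : Bil E E E)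
    (hm : ∀ p q c, m (μ p q) c = m p (m q c)) (k : ℕ) (p q : (E.diter k).carrier)
    (c : (F.diter k).carrier) :
    iterBil m k (iterBil μ k p q) c = iterBil m k p (iterBil m k q c) := by
  induction k with
  | zero => exact hm p q c
  | succ k ih => exact arens_assoc _ _ ih p q c

end BB

theorem memZlBA_mulA_incl (A B : Type) [NonUnitalNormedRing A] [NormedSpace ℝ A]
    [IsScalarTower ℝ A A] [SMulCommClass ℝ A A] [NormedAddCommGroup B] [NormedSpace ℝ B]
    (πl : A →L[ℝ] B →L[ℝ] B) (hπl : ∀ (a a' : A) (b : B), πl (a * a') b = πl a (πl a' b))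
    {k : ℕ} (x : Ad A k) {φ : Ad A (k + 1)} (hφ : MemZlBA A B πl k φ) :
    MemZlBA A B πl k (mulA A (k + 1) (BB.incl ((BB.of A).diter k) x) φ) := by
  intro ι l hl bα b hb f
  have hmul : ∀ c, actL A B πl (k + 1) (mulA A (k + 1) (BB.incl _ x) φ) c f =
      actL A B πl (k + 1) φ c (BB.bst (actL A B πl k) f x) := fun c => by
    rw [BB.iterBil_assoc _ _ hπl (k + 1)]
    exact BB.arens_incl_apply _ _ _ _
  simp only [hmul]
  exact hφ l hl bα b hb _

theorem stmt6_general
    (A B : Type) [NonUnitalNormedRing A] [NormedSpace ℝ A] [IsScalarTower ℝ A A]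
    [SMulCommClass ℝ A A]
    [NormedAddCommGroup B] [NormedSpace ℝ B]
    (πl : A →L[ℝ] B →L[ℝ] B)
    (hπl : ∀ (a a' : A) (b : B), πl (a * a') b = πl a (πl a' b))
    (k : ℕ)
    (h : ∀ (a : Ad A k) (a2 : Ad A (k + 1)), ∃ (x : Ad A k) (φ : Ad A (k + 1)),
        MemZlBA A B πl k φ ∧
          mulA A (k + 1) (BB.incl ((BB.of A).diter k) a) a2 =
            mulA A (k + 1) (BB.incl ((BB.of A).diter k) x) φ) :
    ∀ (a : Ad A k) (a2 : Ad A (k + 1)),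
      MemZlBA A B πl k (mulA A (k + 1) (BB.incl ((BB.of A).diter k) a) a2) := by
  intro a a2
  obtain ⟨x, φ, hφ, heq⟩ := h a a2
  rw [heq]
  exact memZlBA_mulA_incl A B πl hπl x hφ

/-- (`n = 2*k ≥ 0` even.)  If
`A^{(n)} A^{(n+2)} ⊆ A^{(n)} Z^ℓ_{B^{(n+2)}}(A^{(n+2)})` then
`A^{(n)} A^{(n+2)} ⊆ Z^ℓ_{B^{(n+2)}}(A^{(n+2)})`. -/
theorem stmt6
    (A B : Type) [NonUnitalNormedRing A] [NormedSpace ℝ A] [IsScalarTower ℝ A A]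
    [SMulCommClass ℝ A A] [CompleteSpace A]
    [NormedAddCommGroup B] [NormedSpace ℝ B] [CompleteSpace B]
    (πl : A →L[ℝ] B →L[ℝ] B) (πr : B →L[ℝ] A →L[ℝ] B)
    (hπl : ∀ (a a' : A) (b : B), πl (a * a') b = πl a (πl a' b))
    (hπr : ∀ (b : B) (a a' : A), πr b (a * a') = πr (πr b a) a')
    (hπlr : ∀ (a : A) (b : B) (a' : A), πr (πl a b) a' = πl a (πr b a'))
    (k : ℕ)
    (h : ∀ (a : Ad A k) (a2 : Ad A (k + 1)), ∃ (x : Ad A k) (φ : Ad A (k + 1)),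
        MemZlBA A B πl k φ ∧
          mulA A (k + 1) (BB.incl ((BB.of A).diter k) a) a2 =
            mulA A (k + 1) (BB.incl ((BB.of A).diter k) x) φ) :
    ∀ (a : Ad A k) (a2 : Ad A (k + 1)),
      MemZlBA A B πl k (mulA A (k + 1) (BB.incl ((BB.of A).diter k) a) a2) :=
  stmt6_general A B πl hπl k h
end
end

section
/- Let A be a Banach algebra, B a Banach A-bimodule, and n ≥ 2 an even integer. Suppose there is a_0^(n-2) ∈ A^(n-2) with A^(n) = A^(n)a_0^(n-2) (product in the first Arens product with a_0^(n-2) canonically embedded in A^(n)) such that a_0^(n-2) has the Lw*w-property: for every net (x_α) in A^(n-1) = (A^(n-2))*, if a_0^(n-2)x_α → 0 in the weak* topology of A^(n-1), then a_0^(n-2)x_α → 0 weakly in A^(n-1), where ⟨a x, c⟩ = ⟨x, ca⟩ for x ∈ A^(n-1), a, c ∈ A^(n-2). Then Z^ℓ_{B^(n)}(A^(n)) = A^(n). -/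
/-!
Common infrastructure for formalizing "Topological centers of the n-th dual of
module actions" (Haghnejad Azar, Riazi).

We work over `ℝ`.  A Banach algebra is a complete `NonUnitalNormedRing` which is
a normed `ℝ`-algebra; a Banach `A`-bimodule `B` is given by two continuous
bilinear module actions `πl : A →L B →L B`, `πr : B →L A →L B` satisfying the
usual associativity identities.

`BB` bundles a normed `ℝ`-space.  `BB.dual` is the topological dual,
`BB.bst` is the Arens adjoint `m ↦ m^*` of a bounded bilinear map
(`⟨m^*(z',x), y⟩ = ⟨z', m(x,y)⟩`), `BB.arens m = m^{***}` is the first Arens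
extension, `BB.diter E k` is the `2k`-th dual of `E`, and `BB.iterBil m k` is
the `k`-fold iterated first Arens extension of `m` acting on `2k`-th duals.

Even integers `n ≥ 0` (resp. `n ≥ 2`) are represented as `n = 2*k`
(resp. `n = 2*(j+1)`), so that `A^{(n)}` is `Ad A k`, `A^{(n+1)}` is
`((BB.of A).diter k).dual.carrier`, etc.

Weak-star and weak convergence of nets are expressed through filters
(`wsTendsto`, `wTendsto`), and the relevant topological centers and `wap`
spaces become the predicates `MemZlBA`, `MemZlAB`, `MemWapL` below.
-/

noncomputable section

open ContinuousLinearMap Filter Topology Bornology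

/-!
If `A^{(n)} = A^{(n)} a₀` then every `z ∈ A^{(n)}` is `x a₀`, and `⟨z b, z'⟩ = ⟨x, m^{**}(b, z') a₀⟩`
for the module action `m` of the previous level. Along a weak-star convergent net `b_α` the
functionals `m^{**}(b_α, z') a₀` converge weak-star, hence weakly by the `Lw*w`-property of `a₀`,
and weak convergence is exactly what is needed to pass to the limit under the bidual element `x`.
-/

namespace BB

variable {E F G : BB}

/-- For `T = (· a₀)` this is the `Lw*w`-property of `a₀`. -/
def HasLwwProperty (T : E.carrier →L[ℝ] E.carrier) : Prop :=
  ∀ {ι : Type} (l : Filter ι), l.NeBot → ∀ xα : ι → E.dual.carrier,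
    wsTendsto l (fun i => (xα i).comp T) 0 →
      wTendsto (E := E.dual) l (fun i => (xα i).comp T) 0

theorem arens_incl_right (π : Bil E F G) (x : E.dual.dual.carrier) (f : F.carrier) :
    arens π x (incl F f) = adj (adj (π.flip f)) x :=
  rfl

theorem wsTendsto_bst_bst (m : Bil E F G) {ι : Type} {l : Filter ι}
    {yα : ι → F.dual.dual.carrier} {y : F.dual.dual.carrier}
    (hy : wsTendsto (E := F.dual) l yα y) (g : G.dual.carrier) :
    wsTendsto l (fun i => bst (bst m) (yα i) g) (bst (bst m) y g) :=
  fun x => hy (bst m g x)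

theorem _root_.wsTendsto.comp_right {ι : Type} {l : Filter ι} {fα : ι → E.dual.carrier}
    {f : E.dual.carrier} (hf : wsTendsto l fα f) (T : E.carrier →L[ℝ] E.carrier) :
    wsTendsto l (fun i => (fα i).comp T) (f.comp T) :=
  fun x => hf (T x)

theorem HasLwwProperty.wTendsto {T : E.carrier →L[ℝ] E.carrier} (hT : HasLwwProperty T)
    {ι : Type} {l : Filter ι} (hl : l.NeBot) {xα : ι → E.dual.carrier} {x : E.dual.carrier}
    (hx : wsTendsto l (fun i => (xα i).comp T) (x.comp T)) :
    wTendsto (E := E.dual) l (fun i => (xα i).comp T) (x.comp T) := by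
  have hnull := hT l hl (fun i => xα i - x) fun c => by
    simpa only [sub_comp, sub_apply, zero_apply, tendsto_sub_nhds_zero_iff] using hx c
  intro ψ
  simpa only [sub_comp, map_sub, map_zero, tendsto_sub_nhds_zero_iff] using hnull ψ

theorem arens_adj_adj_wsTendsto (m : Bil E F G) {T : E.carrier →L[ℝ] E.carrier}
    (hT : HasLwwProperty T) (x : E.dual.dual.carrier) {ι : Type} {l : Filter ι} (hl : l.NeBot)
    {yα : ι → F.dual.dual.carrier} {y : F.dual.dual.carrier}
    (hy : wsTendsto (E := F.dual) l yα y) :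
    wsTendsto (E := G.dual) l (fun i => arens m (adj (adj T) x) (yα i))
      (arens m (adj (adj T) x) y) :=
  fun g => hT.wTendsto hl (wsTendsto.comp_right (wsTendsto_bst_bst m hy g) T) x

end BB

theorem stmt13_general
    (A B : Type) [NonUnitalNormedRing A] [NormedSpace ℝ A] [IsScalarTower ℝ A A]
    [SMulCommClass ℝ A A]
    [NormedAddCommGroup B] [NormedSpace ℝ B]
    (πl : A →L[ℝ] B →L[ℝ] B)
    (j : ℕ) (a0 : Ad A j)
    (hfact : ∀ z : Ad A (j + 1), ∃ x : Ad A (j + 1),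
        z = mulA A (j + 1) x (BB.incl ((BB.of A).diter j) a0))
    (hLww : ∀ {ι : Type} (l : Filter ι), l.NeBot →
        ∀ xα : ι → ((BB.of A).diter j).dual.carrier,
          wsTendsto (E := (BB.of A).diter j) l
            (fun i => (xα i).comp ((mulA A j).flip a0)) 0 →
          wTendsto (E := ((BB.of A).diter j).dual) l
            (fun i => (xα i).comp ((mulA A j).flip a0)) 0) :
    ∀ a : Ad A (j + 1), MemZlBA A B πl j a := by
  intro z ι l hl bα b hb
  obtain ⟨x, rfl⟩ := hfact z
  rw [mulA, BB.iterBil, BB.arens_incl_right]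
  exact BB.arens_adj_adj_wsTendsto (actL A B πl j) hLww x hl hb

/-- (`n = 2*(j+1) ≥ 2` even.)  If `A^{(n)} = A^{(n)} a₀^{(n-2)}`
for some `a₀^{(n-2)} ∈ A^{(n-2)}` having the `Lw*w`-property (for every net
`(x_α)` in `A^{(n-1)}`, `a₀ x_α → 0` weak-star implies `a₀ x_α → 0` weakly,
where `⟨a x, c⟩ = ⟨x, c a⟩`), then `Z^ℓ_{B^{(n)}}(A^{(n)}) = A^{(n)}`. -/
theorem stmt13
    (A B : Type) [NonUnitalNormedRing A] [NormedSpace ℝ A] [IsScalarTower ℝ A A]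
    [SMulCommClass ℝ A A] [CompleteSpace A]
    [NormedAddCommGroup B] [NormedSpace ℝ B] [CompleteSpace B]
    (πl : A →L[ℝ] B →L[ℝ] B) (πr : B →L[ℝ] A →L[ℝ] B)
    (hπl : ∀ (a a' : A) (b : B), πl (a * a') b = πl a (πl a' b))
    (hπr : ∀ (b : B) (a a' : A), πr b (a * a') = πr (πr b a) a')
    (hπlr : ∀ (a : A) (b : B) (a' : A), πr (πl a b) a' = πl a (πr b a'))
    (j : ℕ) (a0 : Ad A j)
    (hfact : ∀ z : Ad A (j + 1), ∃ x : Ad A (j + 1),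
        z = mulA A (j + 1) x (BB.incl ((BB.of A).diter j) a0))
    (hLww : ∀ {ι : Type} (l : Filter ι), l.NeBot →
        ∀ xα : ι → ((BB.of A).diter j).dual.carrier,
          wsTendsto (E := (BB.of A).diter j) l
            (fun i => (xα i).comp ((mulA A j).flip a0)) 0 →
          wTendsto (E := ((BB.of A).diter j).dual) l
            (fun i => (xα i).comp ((mulA A j).flip a0)) 0) :
    ∀ a : Ad A (j + 1), MemZlBA A B πl j a :=
  stmt13_general A B πl j a0 hfact hLww
end
end
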